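/- Let I be an ideal of R generated by homogeneous elements of a single degree d with dim R/I = 0, and let a_n = reg R/I^n − dn + 1 be the defect sequence of the function reg R/I^n. Then a_n − a_{n+1} ≤ d for all n ≥ 1. -/

import Mathlib

/-!
Every homogeneous prime containing `I` is contained in the irrelevant ideal `m`; as
`dim R/I = 0` such a prime is maximal, so it equals `m`. Hence `m ⊆ √I`, and since `m` is
finitely generated, `m^N ⊆ I` for some `N`: every `R/I^n` vanishes in large degrees. For such
a graded Artinian module `R/B` the regularity is its top nonzero degree `D`: a nonzero element
of degree `D` in the last spot of the Koszul complex is a cycle but not a boundary, while a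
Koszul cycle whose internal degree exceeds `D` plus its homological degree has all its
coordinates in `B`. Finally `I^(n+1) ⊆ I^n`, so the top degree of `R/I^n` is at most that of
`R/I^(n+1)`, i.e. `reg R/I^n ≤ reg R/I^(n+1)`, which is `a_n - a_(n+1) ≤ d`.
-/

/-!
Common setup.

We encode a finitely generated standard graded algebra `R` over a field `k` by the data
`StdGraded k R`: the grading `deg : ℤ → Submodule k R` (an internal direct sum, vanishing
in negative degrees, with `deg 0 = k·1` and `deg (n+1) = deg 1 * deg n`), together with a
finite family `gen` of degree-one elements spanning `deg 1` over `k` (so `R` is generated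
in degree one by finitely many elements).

For homogeneous ideals `B ⊆ A` of `R`, the Castelnuovo–Mumford regularity of the graded
module `A/B` is formalized through the classical characterization
`reg M = max { j - i : β_{i,j}(M) ≠ 0 }`, where `β_{i,j}(M) = dim_k (Tor_i^S(M, k))_j` is
the graded Betti number over a polynomial ring `S = k[X_1, …, X_r]` mapping onto `R` via
the chosen degree-one generators.  These Betti numbers are computed honestly as the
homology of the graded Koszul complex `K(x_1, …, x_r; M)` on the degree-one generators:
`TorNonzero G A B i j` says that this Koszul homology of `A/B` is nonzero in homological
degree `i` and internal degree `j`.  This agrees with the local cohomology definition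
`reg M = max { a(H_m^i(M)) + i : i ≥ 0 }` for finitely generated graded modules over a
standard graded algebra.  Similarly, by a theorem of Trung, the partial regularity
`reg_t M = max { a(H_m^i(M)) + i : i ≤ t }` equals
`max { j - i : β_{i,j}(M) ≠ 0, i ≥ r - t }`, which is taken as the definition
`preg` below.
-/

structure StdGraded (k R : Type) [Field k] [CommRing R] [Algebra k R] where
  deg : ℤ → Submodule k R
  internal : DirectSum.IsInternal deg
  bot_of_neg : ∀ i : ℤ, i < 0 → deg i = ⊥
  deg_zero : deg 0 = 1
  standard : ∀ n : ℕ, deg ((n : ℤ) + 1) = deg 1 * deg (n : ℤ)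
  ngens : ℕ
  gen : Fin ngens → R
  gen_mem : ∀ i, gen i ∈ deg 1
  gen_span : Submodule.span k (Set.range gen) = deg 1

variable {k R : Type} [Field k] [CommRing R] [Algebra k R]

/-- The Koszul differential on the Koszul complex (on the degree-one generators of `R`)
with coefficients in `R`; a function `Finset (Fin r) → R` records the coordinates of an
element of an exterior power component with respect to the basis `e_s`. -/
noncomputable def kosD (G : StdGraded k R) (f : Finset (Fin G.ngens) → R) :
    Finset (Fin G.ngens) → R := fun t =>
  ∑ j ∈ tᶜ, (-1 : R) ^ ((t.filter fun l => l < j).card) * G.gen j * f (insert j t)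

/-- `TorNonzero G A B i j` : the internal degree `j` part of the `i`-th homology of the
Koszul complex of the degree-one generators with coefficients in the graded module `A/B`
is nonzero; equivalently, the graded Betti number `β_{i,j}(A/B)` over a polynomial ring
mapping onto `R` is nonzero. -/
def TorNonzero (G : StdGraded k R) (A B : Ideal R) (i : ℕ) (j : ℤ) : Prop :=
  ∃ f : Finset (Fin G.ngens) → R,
    (∀ s, if s.card = i then f s ∈ A ∧ f s ∈ G.deg (j - (i : ℤ)) else f s = 0) ∧
    (∀ t, kosD G f t ∈ B) ∧
    ¬ ∃ g : Finset (Fin G.ngens) → R,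
        (∀ s, if s.card = i + 1 then g s ∈ A ∧ g s ∈ G.deg (j - (i : ℤ) - 1) else g s = 0) ∧
        (∀ s, f s - kosD G g s ∈ B)

/-- The Castelnuovo–Mumford regularity `reg (A/B) = max { a(H_m^i(A/B)) + i : i ≥ 0 }` of
the graded `R`-module `A/B`, via the graded Betti number characterization
`reg = max { j - i : β_{i,j} ≠ 0 }`. -/
noncomputable def reg (G : StdGraded k R) (A B : Ideal R) : ℤ :=
  sSup {e : ℤ | ∃ (i : ℕ) (j : ℤ), e = j - (i : ℤ) ∧ TorNonzero G A B i j}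

/-- The partial regularity `reg_t (A/B) = max { a(H_m^i(A/B)) + i : 0 ≤ i ≤ t }`, via
Trung's characterization `reg_t M = max { j - i : β_{i,j}(M) ≠ 0, i ≥ r - t }`. -/
noncomputable def preg (G : StdGraded k R) (t : ℕ) (A B : Ideal R) : ℤ :=
  sSup {e : ℤ | ∃ (i : ℕ) (j : ℤ), G.ngens - t ≤ i ∧ e = j - (i : ℤ) ∧ TorNonzero G A B i j}

/-- `I` is a homogeneous (graded) ideal. -/
def IsHomogeneousIdeal (G : StdGraded k R) (I : Ideal R) : Prop :=
  ∃ T : Set R, (∀ s ∈ T, ∃ j : ℤ, s ∈ G.deg j) ∧ I = Ideal.span T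

/-- `I` is generated by forms of the single degree `d` (equigenerated). -/
def GeneratedInDegree (G : StdGraded k R) (d : ℕ) (I : Ideal R) : Prop :=
  ∃ T : Set R, T ⊆ (G.deg (d : ℤ) : Set R) ∧ I = Ideal.span T

/-- The irrelevant maximal graded ideal `m = ⊕_{i > 0} R_i` of the standard graded
algebra `R` (generated by the degree-one part). -/
def irrel (G : StdGraded k R) : Ideal R := Ideal.span (G.deg 1 : Set R)

/-- The saturation `Ĩ = ∪_t (I : m^t)` of an ideal `I`. -/
noncomputable def satIdeal (G : StdGraded k R) (I : Ideal R) : Ideal R :=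
  ⨆ t : ℕ, Submodule.colon I (((irrel G) ^ t : Ideal R) : Set R)

open Classical in
/-- The supremum in `WithBot ℤ` of a set of integers: `⊥` (i.e. `-∞`) if the set is
empty.  (Junk value if the set is unbounded above.) -/
noncomputable def zsupBot (s : Set ℤ) : WithBot ℤ :=
  if s.Nonempty then ((sSup s : ℤ) : WithBot ℤ) else ⊥

/-- The saturation degree `sdeg I = a(Ĩ/I) + 1 = a(H_m^0(R/I)) + 1`: the least degree
from which `Ĩ` and `I` agree, `⊥` (i.e. `-∞`) if `Ĩ = I`. -/
noncomputable def sdegB (G : StdGraded k R) (I : Ideal R) : WithBot ℤ :=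
  zsupBot {a : ℤ | ∃ j : ℤ, a = j + 1 ∧ ∃ y : R, y ∈ G.deg j ∧ y ∈ satIdeal G I ∧ y ∉ I}

theorem Ideal.IsPrime.isMaximal_of_krullDimLE_quotient {A : Type*} [CommRing A] {I P : Ideal A}
    [Ring.KrullDimLE 0 (A ⧸ I)] (hP : P.IsPrime) (hIP : I ≤ P) : P.IsMaximal := by
  have : (P.map (Ideal.Quotient.mk I)).IsPrime := Ideal.isPrime_map_quotientMk_of_isPrime hIP
  simpa [Ideal.comap_map_mk hIP] using
    Ideal.comap_isMaximal_of_surjective (Ideal.Quotient.mk I) Ideal.Quotient.mk_surjective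
      (K := P.map (Ideal.Quotient.mk I))

namespace StdGraded

variable (G : StdGraded k R)

theorem deg_natCast : ∀ n : ℕ, G.deg n = G.deg 1 ^ n
  | 0 => by simpa using G.deg_zero
  | n + 1 => by
      rw [pow_succ', ← deg_natCast n]
      exact_mod_cast G.standard n

theorem one_mem_deg_zero : (1 : R) ∈ G.deg 0 := by
  rw [G.deg_zero]
  exact Submodule.one_le.mp le_rfl

variable {G}

theorem eq_zero_of_mem_deg_of_neg {i : ℤ} {x : R} (hx : x ∈ G.deg i) (hi : i < 0) : x = 0 := by
  rwa [G.bot_of_neg i hi, Submodule.mem_bot] at hx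

theorem isUnit_or_eq_zero_of_mem_deg_zero {x : R} (hx : x ∈ G.deg 0) : IsUnit x ∨ x = 0 := by
  rw [G.deg_zero] at hx
  obtain ⟨c, rfl⟩ := Submodule.mem_one.mp hx
  rcases eq_or_ne c 0 with rfl | hc
  · simp
  · exact .inl ((isUnit_iff_ne_zero.mpr hc).map _)

theorem mul_mem_deg {i j : ℤ} {x y : R} (hx : x ∈ G.deg i) (hy : y ∈ G.deg j) :
    x * y ∈ G.deg (i + j) := by
  rcases lt_or_ge i 0 with hi | hi
  · simp [eq_zero_of_mem_deg_of_neg hx hi]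
  rcases lt_or_ge j 0 with hj | hj
  · simp [eq_zero_of_mem_deg_of_neg hy hj]
  lift i to ℕ using hi
  lift j to ℕ using hj
  rw [← Nat.cast_add, deg_natCast, pow_add]
  rw [deg_natCast] at hx hy
  exact Submodule.mul_mem_mul hx hy

variable (G)

instance : SetLike.GradedMonoid G.deg where
  one_mem := G.one_mem_deg_zero
  mul_mem _ _ _ _ := mul_mem_deg

noncomputable instance : GradedRing G.deg where
  __ := G.internal.chooseDecomposition

theorem deg_le_irrel_pow : ∀ n : ℕ, ∀ x ∈ G.deg n, x ∈ irrel G ^ n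
  | 0 => fun _ _ => by simp
  | n + 1 => fun x hx => by
      rw [Nat.cast_succ, G.standard n] at hx
      refine Submodule.mul_induction_on hx (fun a ha b hb => ?_) (fun _ _ => Ideal.add_mem _)
      rw [pow_succ']
      exact Ideal.mul_mem_mul (Ideal.subset_span ha) (deg_le_irrel_pow n b hb)

theorem mem_pow_of_mem_deg {I : Ideal R} {N : ℕ} (hN : irrel G ^ N ≤ I) (m : ℕ) {j : ℤ}
    (hj : (N * m : ℕ) ≤ j) {y : R} (hy : y ∈ G.deg j) : y ∈ I ^ m := by
  lift j to ℕ using le_trans (Nat.cast_nonneg _) hj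
  have hle : irrel G ^ j ≤ (irrel G ^ N) ^ m := by
    rw [← pow_mul]
    exact Ideal.pow_le_pow_right (by exact_mod_cast hj)
  exact Ideal.pow_right_mono hN m (hle (G.deg_le_irrel_pow j y hy))

theorem irrel_eq_span_gen : irrel G = Ideal.span (Set.range G.gen) := by
  rw [irrel, ← G.gen_span, Ideal.span, Submodule.span_span_of_tower]

theorem irrel_fg : (irrel G).FG := by
  rw [irrel_eq_span_gen]
  exact ⟨(Set.finite_range G.gen).toFinset, by simp⟩

theorem decompose_zero_eq_zero_of_mem_irrel {x : R} (hx : x ∈ irrel G) :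
    (DirectSum.decompose G.deg x 0 : R) = 0 := by
  suffices ∀ r : R, (DirectSum.decompose G.deg (r * x) 0 : R) = 0 by simpa using this 1
  induction hx using Submodule.span_induction with
  | mem y hy =>
    intro r
    rw [← neg_add_cancel (1 : ℤ), DirectSum.coe_decompose_mul_add_of_right_mem G.deg hy,
      eq_zero_of_mem_deg_of_neg (SetLike.coe_mem _) (by norm_num), zero_mul]
  | zero => simp
  | add y z _ _ hy hz =>
    intro r
    simp only [mul_add, DirectSum.decompose_add, DirectSum.add_apply, Submodule.coe_add, hy r,
      hz r, add_zero]
  | smul a y _ hy =>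
    intro r
    simpa [mul_assoc] using hy (r * a)

theorem irrel_ne_top [Nontrivial R] : irrel G ≠ ⊤ := by
  intro h
  have := G.decompose_zero_eq_zero_of_mem_irrel (h ▸ Submodule.mem_top : (1 : R) ∈ irrel G)
  rw [DirectSum.decompose_of_mem_same _ G.one_mem_deg_zero] at this
  exact one_ne_zero this

theorem mem_irrel_of_mem_deg_of_pos {i : ℤ} {x : R} (hx : x ∈ G.deg i) (hi : 0 < i) :
    x ∈ irrel G := by
  lift i to ℕ using hi.le
  exact Ideal.pow_le_self (by omega) (G.deg_le_irrel_pow i x hx)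

theorem le_irrel_of_isHomogeneous {Q : Ideal R} (hQ : Q.IsHomogeneous G.deg) (hQt : Q ≠ ⊤) :
    Q ≤ irrel G := by
  classical
  intro x hx
  rw [← DirectSum.sum_support_decompose G.deg x]
  refine Ideal.sum_mem _ fun i _ => ?_
  have hxi := SetLike.coe_mem (DirectSum.decompose G.deg x i)
  rcases lt_trichotomy i 0 with hi | rfl | hi
  · rw [eq_zero_of_mem_deg_of_neg hxi hi]
    exact Ideal.zero_mem _
  · rcases isUnit_or_eq_zero_of_mem_deg_zero hxi with hu | h0
    · exact absurd (Ideal.eq_top_of_isUnit_mem Q (hQ 0 hx) hu) hQt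
    · rw [h0]
      exact Ideal.zero_mem _
  · exact G.mem_irrel_of_mem_deg_of_pos hxi hi

theorem irrel_le_radical [Nontrivial R] {I : Ideal R} (hI : I.IsHomogeneous G.deg)
    [Ring.KrullDimLE 0 (R ⧸ I)] : irrel G ≤ I.radical := by
  rw [Ideal.radical_eq_sInf]
  refine le_sInf fun P ⟨hIP, hP⟩ => ?_
  -- the homogeneous core of `P` is a homogeneous prime over `I`, hence maximal and inside `irrel`
  set Q := (P.homogeneousCore G.deg).toIdeal
  have hQ : Q.IsPrime := hP.homogeneousCore
  have hIQ : I ≤ Q := hI.toIdeal_homogeneousCore_eq_self ▸ Ideal.homogeneousCore_mono G.deg hIP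
  have hQmax := hQ.isMaximal_of_krullDimLE_quotient hIQ
  have hQirrel := G.le_irrel_of_isHomogeneous (P.homogeneousCore G.deg).isHomogeneous hQ.ne_top
  rw [← hQmax.eq_of_le G.irrel_ne_top hQirrel]
  exact Ideal.toIdeal_homogeneousCore_le G.deg P

end StdGraded

theorem GeneratedInDegree.isHomogeneous {G : StdGraded k R} {d : ℕ} {I : Ideal R}
    (h : GeneratedInDegree G d I) : I.IsHomogeneous G.deg := by
  obtain ⟨T, hT, rfl⟩ := h
  exact Ideal.homogeneous_span _ _ fun x hx => ⟨d, hT hx⟩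

section Regularity

variable (G : StdGraded k R)

theorem kosD_zero : kosD G 0 = 0 := by
  ext t
  simp [kosD]

def nonzeroDegrees (B : Ideal R) : Set ℤ := {j : ℤ | ∃ y ∈ G.deg j, y ∉ B}

variable {G} {B : Ideal R} {N₀ : ℤ}

theorem zero_mem_nonzeroDegrees (hB : B ≠ ⊤) : 0 ∈ nonzeroDegrees G B :=
  ⟨1, G.one_mem_deg_zero, fun h => hB ((Ideal.eq_top_iff_one B).mpr h)⟩

theorem nonzeroDegrees_bddAbove (hb : ∀ j, N₀ ≤ j → ∀ y ∈ G.deg j, y ∈ B) :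
    BddAbove (nonzeroDegrees G B) :=
  ⟨N₀ - 1, fun j ⟨y, hy, hyB⟩ => by
    by_contra h
    exact hyB (hb j (by omega) y hy)⟩

theorem mem_of_sSup_nonzeroDegrees_lt (hb : ∀ j, N₀ ≤ j → ∀ y ∈ G.deg j, y ∈ B) {j : ℤ}
    (hj : sSup (nonzeroDegrees G B) < j) {y : R} (hy : y ∈ G.deg j) : y ∈ B := by
  by_contra hyB
  exact hj.not_ge (le_csSup (nonzeroDegrees_bddAbove hb) ⟨y, hy, hyB⟩)

theorem torNonzero_top_ngens (hB : B ≠ ⊤) (hb : ∀ j, N₀ ≤ j → ∀ y ∈ G.deg j, y ∈ B) :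
    TorNonzero G ⊤ B G.ngens (sSup (nonzeroDegrees G B) + G.ngens) := by
  classical
  set D := sSup (nonzeroDegrees G B)
  obtain ⟨y, hy, hyB⟩ : D ∈ nonzeroDegrees G B :=
    Int.csSup_mem ⟨0, zero_mem_nonzeroDegrees hB⟩ (nonzeroDegrees_bddAbove hb)
  have hcard (s : Finset (Fin G.ngens)) : s.card = G.ngens ↔ s = Finset.univ := by
    simpa using Finset.card_eq_iff_eq_univ s
  refine ⟨fun s => if s = Finset.univ then y else 0, fun s => ?_, fun t => ?_, ?_⟩
  · by_cases hs : s = Finset.univ <;> simp [hs, hcard, hy]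
  · refine Ideal.sum_mem _ fun l _ => ?_
    dsimp only
    split_ifs
    · rw [mul_assoc]
      refine Ideal.mul_mem_left _ _ (mem_of_sSup_nonzeroDegrees_lt hb (lt_add_one D) ?_)
      simpa [add_comm] using StdGraded.mul_mem_deg (G.gen_mem l) hy
    · simp
  · rintro ⟨g, hg, hfg⟩
    have hg0 : g = 0 := by
      ext s
      have : s.card ≠ G.ngens + 1 := by
        have := Finset.card_le_univ s
        simp only [Fintype.card_fin] at this
        omega
      simpa [this] using hg s
    simpa [hg0, kosD_zero, hyB] using hfg Finset.univ

theorem sub_le_sSup_nonzeroDegrees (hb : ∀ j, N₀ ≤ j → ∀ y ∈ G.deg j, y ∈ B) {i : ℕ} {j : ℤ}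
    (ht : TorNonzero G ⊤ B i j) : j - i ≤ sSup (nonzeroDegrees G B) := by
  by_contra! h
  obtain ⟨f, hf, -, hf_not_boundary⟩ := ht
  refine hf_not_boundary ⟨0, fun s => ?_, fun s => ?_⟩
  · split_ifs <;> simp
  · have := hf s
    split_ifs at this
    · simpa [kosD_zero] using mem_of_sSup_nonzeroDegrees_lt hb h this.2
    · simp [kosD_zero, this]

theorem reg_top_eq_sSup_nonzeroDegrees (hB : B ≠ ⊤)
    (hb : ∀ j, N₀ ≤ j → ∀ y ∈ G.deg j, y ∈ B) :
    reg G ⊤ B = sSup (nonzeroDegrees G B) := by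
  have hub : ∀ e ∈ {e : ℤ | ∃ (i : ℕ) (j : ℤ), e = j - i ∧ TorNonzero G ⊤ B i j},
      e ≤ sSup (nonzeroDegrees G B) := by
    rintro e ⟨i, j, rfl, ht⟩
    exact sub_le_sSup_nonzeroDegrees hb ht
  refine le_antisymm (csSup_le ⟨_, G.ngens, _, rfl, torNonzero_top_ngens hB hb⟩ hub)
    (le_csSup ⟨_, hub⟩ ⟨G.ngens, _, by ring, torNonzero_top_ngens hB hb⟩)

theorem reg_top_le_reg_top_of_le {B' : Ideal R} (hBB' : B' ≤ B) (hB : B ≠ ⊤)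
    (hb' : ∀ j, N₀ ≤ j → ∀ y ∈ G.deg j, y ∈ B') : reg G ⊤ B ≤ reg G ⊤ B' := by
  have hb j hj y hy : y ∈ B := hBB' (hb' j hj y hy)
  rw [reg_top_eq_sSup_nonzeroDegrees hB hb,
    reg_top_eq_sSup_nonzeroDegrees (ne_top_of_le_ne_top hB hBB') hb']
  exact csSup_le_csSup (nonzeroDegrees_bddAbove hb') ⟨0, zero_mem_nonzeroDegrees hB⟩
    fun j ⟨y, hy, hyB⟩ => ⟨y, hy, fun h => hyB (hBB' h)⟩

end Regularity

theorem stmt9_general (G : StdGraded k R) (I : Ideal R) (d : ℕ)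
    (hgen : GeneratedInDegree G d I) (hproper : I ≠ ⊤)
    (hdim : ringKrullDim (R ⧸ I) = 0) :
    ∀ n : ℕ, 1 ≤ n →
      (reg G ⊤ (I ^ n) - (d : ℤ) * n + 1) -
          (reg G ⊤ (I ^ (n + 1)) - (d : ℤ) * (n + 1) + 1) ≤ (d : ℤ) := by
  intro n hn
  have : Nontrivial (R ⧸ I) := Ideal.Quotient.nontrivial_iff.mpr hproper
  have : Nontrivial R := (Ideal.Quotient.mk_surjective (I := I)).nontrivial
  have : Ring.KrullDimLE 0 (R ⧸ I) := Ring.krullDimLE_iff.mpr hdim.le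
  obtain ⟨N, hN⟩ := Ideal.exists_pow_le_of_le_radical_of_fg
    (G.irrel_le_radical hgen.isHomogeneous) G.irrel_fg
  have hreg : reg G ⊤ (I ^ n) ≤ reg G ⊤ (I ^ (n + 1)) :=
    reg_top_le_reg_top_of_le (Ideal.pow_le_pow_right n.le_succ)
      (ne_top_of_le_ne_top hproper (Ideal.pow_le_self (by omega)))
      fun j hj _ hy => G.mem_pow_of_mem_deg hN (n + 1) hj hy
  linarith

/-- If `I` is generated by forms of a single degree `d` and `dim R/I = 0`, then the
defect sequence `aₙ = reg R/Iⁿ - d·n + 1` satisfies `aₙ - aₙ₊₁ ≤ d` for all `n ≥ 1`. -/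
theorem stmt9 (G : StdGraded k R) (I : Ideal R) (d : ℕ) (hd : 1 ≤ d)
    (hgen : GeneratedInDegree G d I) (hproper : I ≠ ⊤)
    (hpow : ∀ n : ℕ, 1 ≤ n → I ^ n ≠ ⊥)
    (hdim : ringKrullDim (R ⧸ I) = 0) :
    ∀ n : ℕ, 1 ≤ n →
      (reg G ⊤ (I ^ n) - (d : ℤ) * n + 1) -
          (reg G ⊤ (I ^ (n + 1)) - (d : ℤ) * (n + 1) + 1) ≤ (d : ℤ) :=
  stmt9_general G I d hgen hproper hdim
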